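/- For a free group F on generators g_1,...,g_n and any element g in F, there exist unique elements ∂g/∂g_i in the integral group ring Z[F] such that 1 - g = Σ_{i=1}^n (1 - g_i) · (∂g/∂g_i). -/

import Mathlib

/-!
In the group `DerivGroup k G ι` of pairs `(g, d)` with `(g, d) * (h, e) = (g * h, d * h + e)`, the
second component of a product obeys the right Leibniz rule `∂(u * v) = ∂u * v + ∂v`. Lifting
`g_i ↦ (g_i, e_i)` from the free group therefore yields derivations `∂_i` with `∂_i g_j = δ_ij`.
Since `u ↦ 1 - u` obeys the same Leibniz rule, induction on `g` gives `1 - g = ∑ (1 - g_i) * ∂_i g`.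
Extended linearly to the group ring, `∂_i ((1 - g_j) * x) = -δ_ij x`, so applying `∂_i` to any
representation `1 - g = ∑ (1 - g_j) * D_j` recovers `D_i = ∂_i g`.
-/

open MonoidAlgebra

namespace FoxCalculus

@[ext]
structure DerivGroup (k G ι : Type*) [Ring k] [Group G] where
  base : G
  deriv : ι → MonoidAlgebra k G

namespace DerivGroup

variable {k G ι : Type*} [Ring k] [Group G]

noncomputable instance : Mul (DerivGroup k G ι) :=
  ⟨fun x y => ⟨x.base * y.base, fun i => x.deriv i * of k G y.base + y.deriv i⟩⟩

noncomputable instance : One (DerivGroup k G ι) := ⟨⟨1, 0⟩⟩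

noncomputable instance : Inv (DerivGroup k G ι) :=
  ⟨fun x => ⟨x.base⁻¹, fun i => -(x.deriv i * of k G x.base⁻¹)⟩⟩

@[simp] theorem base_mul (x y : DerivGroup k G ι) : (x * y).base = x.base * y.base := rfl

@[simp] theorem deriv_mul (x y : DerivGroup k G ι) (i : ι) :
    (x * y).deriv i = x.deriv i * of k G y.base + y.deriv i := rfl

@[simp] theorem base_one : (1 : DerivGroup k G ι).base = 1 := rfl

@[simp] theorem deriv_one (i : ι) : (1 : DerivGroup k G ι).deriv i = 0 := rfl

@[simp] theorem base_inv (x : DerivGroup k G ι) : x⁻¹.base = x.base⁻¹ := rfl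

@[simp] theorem deriv_inv (x : DerivGroup k G ι) (i : ι) :
    x⁻¹.deriv i = -(x.deriv i * of k G x.base⁻¹) := rfl

noncomputable instance : Group (DerivGroup k G ι) :=
  Group.ofLeftAxioms
    (fun a b c => DerivGroup.ext (mul_assoc _ _ _) <| funext fun i => by
      simp [add_mul, mul_assoc, add_assoc])
    (fun a => DerivGroup.ext (one_mul _) <| funext fun i => by simp)
    (fun a => DerivGroup.ext (inv_mul_cancel _) <| funext fun i => by
      rw [deriv_mul, deriv_inv, neg_mul, mul_assoc, ← map_mul, inv_mul_cancel, map_one, mul_one,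
        neg_add_cancel, deriv_one])

def baseHom : DerivGroup k G ι →* G where
  toFun := base
  map_one' := rfl
  map_mul' _ _ := rfl

end DerivGroup

variable (k : Type*) {ι : Type*} [CommRing k] [DecidableEq ι]

noncomputable def derivHom : FreeGroup ι →* DerivGroup k (FreeGroup ι) ι :=
  FreeGroup.lift fun i => ⟨FreeGroup.of i, Pi.single i 1⟩

variable {k}

theorem derivHom_of (i : ι) : derivHom k (FreeGroup.of i) = ⟨FreeGroup.of i, Pi.single i 1⟩ :=
  FreeGroup.lift_apply_of

@[simp] theorem base_derivHom (g : FreeGroup ι) : (derivHom k g).base = g :=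
  DFunLike.congr_fun (FreeGroup.ext_hom (DerivGroup.baseHom.comp (derivHom k)) (MonoidHom.id _)
    fun i => by simp [DerivGroup.baseHom, derivHom_of]) g

variable (k) in
noncomputable def foxDeriv (i : ι) :
    MonoidAlgebra k (FreeGroup ι) →ₗ[k] MonoidAlgebra k (FreeGroup ι) :=
  (MonoidAlgebra.basis (FreeGroup ι) k).constr k fun g => (derivHom k g).deriv i

theorem foxDeriv_of (i : ι) (g : FreeGroup ι) :
    foxDeriv k i (of k _ g) = (derivHom k g).deriv i :=
  (MonoidAlgebra.basis (FreeGroup ι) k).constr_basis k _ g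

theorem foxDeriv_of_mul (i : ι) (u v : FreeGroup ι) :
    foxDeriv k i (of k _ (u * v)) =
      foxDeriv k i (of k _ u) * of k _ v + foxDeriv k i (of k _ v) := by
  rw [foxDeriv_of, foxDeriv_of, foxDeriv_of, map_mul, DerivGroup.deriv_mul, base_derivHom]

theorem foxDeriv_of_inv (i : ι) (u : FreeGroup ι) :
    foxDeriv k i (of k _ u⁻¹) = -(foxDeriv k i (of k _ u) * of k _ u⁻¹) := by
  rw [foxDeriv_of, foxDeriv_of, map_inv, DerivGroup.deriv_inv, base_derivHom]

theorem foxDeriv_of_of (i j : ι) :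
    foxDeriv k i (of k _ (FreeGroup.of j)) = if i = j then 1 else 0 := by
  rw [foxDeriv_of, derivHom_of]
  exact Pi.single_apply j 1 i

theorem foxDeriv_one (i : ι) : foxDeriv k i (1 : MonoidAlgebra k (FreeGroup ι)) = 0 := by
  rw [← map_one (of k (FreeGroup ι)), foxDeriv_of, map_one, DerivGroup.deriv_one]

theorem foxDeriv_one_sub_of (i : ι) (g : FreeGroup ι) :
    foxDeriv k i (1 - of k _ g) = -foxDeriv k i (of k _ g) := by
  rw [map_sub, foxDeriv_one, zero_sub]

theorem one_sub_of_eq_sum [Fintype ι] (g : FreeGroup ι) :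
    1 - of k _ g = ∑ j, (1 - of k _ (FreeGroup.of j)) * foxDeriv k j (of k _ g) := by
  induction g using FreeGroup.induction_on with
  | C1 => simp only [map_one, sub_self, foxDeriv_one, mul_zero, Finset.sum_const_zero]
  | of i => simp only [foxDeriv_of_of, mul_ite, mul_one, mul_zero, Finset.sum_ite_eq',
      Finset.mem_univ, if_true]
  | inv_of i ih =>
    simp only [foxDeriv_of_inv, mul_neg, ← mul_assoc, ← Finset.sum_mul, Finset.sum_neg_distrib,
      ← ih]
    rw [sub_mul, one_mul, ← map_mul, mul_inv_cancel, map_one]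
    abel
  | mul u v ihu ihv =>
    simp only [foxDeriv_of_mul]
    simp only [mul_add, Finset.sum_add_distrib, ← mul_assoc, ← Finset.sum_mul,
      ← ihu, ← ihv, map_mul]
    noncomm_ring

theorem foxDeriv_of_of_mul (i j : ι) (y : MonoidAlgebra k (FreeGroup ι)) :
    foxDeriv k i (of k _ (FreeGroup.of j) * y) = (if i = j then y else 0) + foxDeriv k i y := by
  induction y using MonoidAlgebra.induction_on with
  | of g =>
    rw [← map_mul, foxDeriv_of_mul, foxDeriv_of_of, ite_mul, one_mul, zero_mul]
  | add x y hx hy => rw [mul_add, map_add, hx, hy, map_add]; split_ifs <;> abel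
  | smul c x hx => rw [mul_smul_comm, map_smul, hx, map_smul, smul_add, smul_ite, smul_zero]

theorem foxDeriv_sum_one_sub_mul [Fintype ι] (i : ι) (E : ι → MonoidAlgebra k (FreeGroup ι)) :
    foxDeriv k i (∑ j, (1 - of k _ (FreeGroup.of j)) * E j) = -E i := by
  simp only [map_sum, sub_mul, one_mul, map_sub, foxDeriv_of_of_mul, sub_add_cancel_right,
    Finset.sum_neg_distrib, Finset.sum_ite_eq, Finset.mem_univ, if_true]

end FoxCalculus

open FoxCalculus

/-- **Fox derivatives exist and are unique.**
For the free group `F` on generators `g_1, …, g_n` and any `g ∈ F`, there exist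
unique elements `∂g/∂g_i ∈ ℤ[F]` with `1 - g = ∑ i, (1 - g_i) * (∂g/∂g_i)`. -/
theorem fox_derivative_exists_unique (n : ℕ) (g : FreeGroup (Fin n)) :
    ∃! D : Fin n → MonoidAlgebra ℤ (FreeGroup (Fin n)),
      1 - MonoidAlgebra.of ℤ (FreeGroup (Fin n)) g =
        ∑ i : Fin n,
          (1 - MonoidAlgebra.of ℤ (FreeGroup (Fin n)) (FreeGroup.of i)) * D i := by
  refine ⟨fun i => foxDeriv ℤ i (of ℤ _ g), one_sub_of_eq_sum g, fun D hD => funext fun i => ?_⟩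
  have h := congrArg (foxDeriv ℤ i) hD
  rwa [foxDeriv_one_sub_of, foxDeriv_sum_one_sub_mul, neg_inj, eq_comm] at h
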